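/- arXiv:1711.08322 — 2 statements merged into one kernel-verified Lean document; each statement's English description precedes it below -/
import Mathlib

section
/- Define H : [0,1] × ℝ → ℂ² by H(s,t) = (√(1 − s²/2)·e^{it}, (s/√2)·e^{−it}). Then H is continuous; H(s,t) ∈ V_{S³} = {(z₁,z₂) ∈ S³ : |z₂| ≤ 3/4} for all (s,t); for each fixed s the map t ↦ H(s,t) is 2π-periodic and injective on [0, 2π); H(0,t) = (e^{it}, 0) parametrizes the spine of V_{S³}; and H(1,t) = γ(t) = (e^{it}/√2, e^{−it}/√2). Hence the curve γ is isotopic within the solid torus V_{S³}, through embedded circles, to the spine of V_{S³}. -/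
noncomputable section

open Real

/-- The unit 3-sphere in `ℂ²`. -/
def sphere3 : Set (ℂ × ℂ) :=
  {p | ‖p.1‖ ^ 2 + ‖p.2‖ ^ 2 = 1}

/-- The solid torus `V_{S³} = {(z₁,z₂) ∈ S³ : |z₂| ≤ 3/4}`. -/
def solidTorus : Set (ℂ × ℂ) :=
  {p | p ∈ sphere3 ∧ ‖p.2‖ ≤ 3 / 4}

/-- The isotopy `H(s,t) = (√(1 - s²/2)·e^{it}, (s/√2)·e^{-it})`. -/
def Hiso (s t : ℝ) : ℂ × ℂ :=
  ((Real.sqrt (1 - s ^ 2 / 2) : ℂ) * Complex.exp (t * Complex.I),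
   ((s / Real.sqrt 2 : ℝ) : ℂ) * Complex.exp (-(t * Complex.I)))

/-- The curve `γ(t) = (e^{it}/√2, e^{-it}/√2)`. -/
def γcurve (t : ℝ) : ℂ × ℂ :=
  (Complex.exp (t * Complex.I) / (Real.sqrt 2 : ℂ),
   Complex.exp (-(t * Complex.I)) / (Real.sqrt 2 : ℂ))

/-!
Both coordinates of `H(s, ·)` trace circles about `0` (`circleMap`), of radii `√(1 - s²/2)` and
`s/√2`; the squares of the radii add up to `1`, and the first radius is nonzero for `s² < 2`,
which makes `H(s, ·)` injective on one period.
-/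

lemma Hiso_eq_circleMap (s t : ℝ) :
    Hiso s t = (circleMap 0 √(1 - s ^ 2 / 2) t, circleMap 0 (s / √2) (-t)) := by
  simp [Hiso, circleMap]

lemma continuous_Hiso : Continuous (fun p : ℝ × ℝ => Hiso p.1 p.2) := by
  unfold Hiso
  fun_prop

lemma Hiso_zero (t : ℝ) : Hiso 0 t = (Complex.exp (t * Complex.I), 0) := by
  simp [Hiso]

lemma Hiso_one (t : ℝ) : Hiso 1 t = γcurve t := by
  have h : √(1 - 1 ^ 2 / 2) = (√2)⁻¹ := by
    rw [← Real.sqrt_inv]; norm_num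
  simp only [Hiso, γcurve, h]
  push_cast
  ext <;> ring

lemma periodic_Hiso (s : ℝ) : Function.Periodic (Hiso s) (2 * π) := by
  intro t
  simp only [Hiso_eq_circleMap, neg_add, ← sub_eq_add_neg, (periodic_circleMap _ _).sub_eq,
    periodic_circleMap _ _ t]

lemma Hiso_mem_sphere3 {s : ℝ} (hs : s ^ 2 ≤ 2) (t : ℝ) : Hiso s t ∈ sphere3 := by
  have h2 : √2 ^ 2 = 2 := Real.sq_sqrt zero_le_two
  show ‖(Hiso s t).1‖ ^ 2 + ‖(Hiso s t).2‖ ^ 2 = 1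
  rw [Hiso_eq_circleMap, norm_circleMap_zero, norm_circleMap_zero, sq_abs, sq_abs, div_pow, h2,
    Real.sq_sqrt (by linarith)]
  ring

lemma Hiso_mem_solidTorus {s : ℝ} (hs : s ^ 2 ≤ 9 / 8) (t : ℝ) : Hiso s t ∈ solidTorus := by
  refine ⟨Hiso_mem_sphere3 (by linarith) t, ?_⟩
  rw [Hiso_eq_circleMap, norm_circleMap_zero, abs_div, abs_of_pos (by positivity : (0:ℝ) < √2),
    div_le_iff₀ (by positivity), ← sq_le_sq₀ (by positivity) (by positivity), sq_abs, mul_pow,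
    Real.sq_sqrt zero_le_two]
  linarith

lemma injOn_Hiso {s : ℝ} (hs : s ^ 2 < 2) : Set.InjOn (Hiso s) (Set.Ico 0 (2 * π)) := by
  have hR : √(1 - s ^ 2 / 2) ≠ 0 := (Real.sqrt_pos.mpr (by linarith)).ne'
  have hfst : Prod.fst ∘ Hiso s = circleMap 0 √(1 - s ^ 2 / 2) :=
    funext fun t => by simp [Hiso_eq_circleMap]
  refine Set.InjOn.of_comp (g := Prod.fst) ?_
  rw [hfst]
  exact injOn_circleMap_of_abs_sub_le' hR (sub_zero _).le

/-- `H(s,t) = (√(1-s²/2)·e^{it}, (s/√2)·e^{-it})` is a continuous family of embedded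
circles in the solid torus `V_{S³}` connecting the spine `t ↦ (e^{it},0)` (at `s = 0`)
to the Legendrian curve `γ` (at `s = 1`); hence `γ` is isotopic within `V_{S³}`,
through embedded circles, to the spine of `V_{S³}`. -/
theorem gamma_isotopic_to_spine :
    Continuous (fun p : ℝ × ℝ => Hiso p.1 p.2) ∧
    (∀ s ∈ Set.Icc (0 : ℝ) 1,
      (∀ t : ℝ, Hiso s t ∈ solidTorus) ∧
      (∀ t : ℝ, Hiso s (t + 2 * π) = Hiso s t) ∧
      Set.InjOn (Hiso s) (Set.Ico 0 (2 * π))) ∧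
    (∀ t : ℝ, Hiso 0 t = (Complex.exp (t * Complex.I), 0)) ∧
    (∀ t : ℝ, Hiso 1 t = γcurve t) := by
  refine ⟨continuous_Hiso, fun s ⟨hs0, hs1⟩ => ?_, Hiso_zero, Hiso_one⟩
  have hs : s ^ 2 ≤ 1 := by nlinarith
  exact ⟨Hiso_mem_solidTorus (by linarith), periodic_Hiso s, injOn_Hiso (by linarith)⟩
end
end

section
/- For every k ∈ ℤ, let X_k be the topological space obtained from the disjoint union of two copies of the solid torus S¹ × D² (S¹ the unit circle, D² the closed unit disc in ℂ) by identifying each boundary point (u, w) with |w| = 1 of the first copy with the boundary point (w, u^{−1}·w^{−k}) of the second copy, equipped with the quotient topology. Then X_k is homeomorphic to the 3-sphere S³. (This is the statement that surgery along S¹×{*} ⊂ S¹×S² with any integral framing k produces S³: the gluing sends the meridian of the glued-in solid torus to the class λ₁ − kμ₁ on the boundary of the complementary solid torus.) -/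
noncomputable section

/-- The solid torus `S¹ × D²`, with `S¹` the unit circle and `D²` the closed unit
disc in `ℂ`. -/
abbrev SolidTorus : Type :=
  {u : ℂ // ‖u‖ = 1} × {w : ℂ // ‖w‖ ≤ 1}

/-- The gluing relation for framing `k`: the boundary point `(u,w)` (with `|w| = 1`)
of the first copy of `S¹ × D²` is identified with the boundary point
`(w, u⁻¹·w⁻ᵏ)` of the second copy. -/
def glueRel (k : ℤ) (x y : SolidTorus ⊕ SolidTorus) : Prop :=
  ∃ p : SolidTorus, ‖(p.2 : ℂ)‖ = 1 ∧ x = Sum.inl p ∧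
    ∃ q : SolidTorus, (q.1 : ℂ) = (p.2 : ℂ) ∧
      (q.2 : ℂ) = ((p.1 : ℂ))⁻¹ * ((p.2 : ℂ)) ^ (-k) ∧ y = Sum.inr q

/-- The result of gluing two solid tori `S¹ × D²` along their boundaries by
`(u,w) ↦ (w, u⁻¹·w⁻ᵏ)`, with the quotient topology. -/
abbrev SurgeredSpace (k : ℤ) : Type := Quot (glueRel k)

/-!
Inside `ℂ²` with the sup norm, the unit sphere is the boundary of the polydisc,
`∂(D² × D²) = S¹ × D² ∪ D² × S¹`: the standard genus one Heegaard splitting of `S³`. Send the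
first solid torus identically onto `S¹ × D²` and the second onto `D² × S¹` by
`(v, z) ↦ (z̄ v⁻ᵏ, v)`. On the boundary torus this twist undoes the gluing map, since
`conj (u⁻¹ w⁻ᵏ) w⁻ᵏ = u` when `|u| = |w| = 1`, so the two maps descend to a continuous bijection
from the compact space `X_k` onto `∂(D² × D²)`, a homeomorphism. Radial projection then carries
`∂(D² × D²)` onto the Euclidean unit sphere.
-/

open ComplexConjugate

section QuotHomeomorph

variable {X Y : Type*} [TopologicalSpace X] [CompactSpace X] [TopologicalSpace Y] [T2Space Y]
  {r : X → X → Prop}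

def Quot.homeomorphOfFibers (f : X → Y) (hf : Continuous f) (hsurj : Function.Surjective f)
    (hr : ∀ x y, r x y → f x = f y) (hfib : ∀ x y, f x = f y → Quot.mk r x = Quot.mk r y) :
    Quot r ≃ₜ Y :=
  have hinj : Function.Injective (Quot.lift f hr) := by
    rintro ⟨x⟩ ⟨y⟩ h
    exact hfib x y h
  (continuous_quot_lift hr hf).homeoOfEquivCompactToT2
    (f := .ofBijective _ ⟨hinj, (Quot.surjective_lift hr).2 hsurj⟩)

end QuotHomeomorph

section RadialGauge

variable {E : Type*} [AddCommGroup E] [Module ℝ E] [TopologicalSpace E]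

structure IsRadialGauge (N : E → ℝ) : Prop where
  continuous : Continuous N
  pos_of_ne_zero : ∀ x, x ≠ 0 → 0 < N x
  smul_of_nonneg : ∀ c : ℝ, 0 ≤ c → ∀ x, N (c • x) = c * N x

namespace IsRadialGauge

variable {N N' : E → ℝ}

theorem map_zero (hN : IsRadialGauge N) : N 0 = 0 := by
  simpa using hN.smul_of_nonneg 0 le_rfl 0

theorem pos_of_eq_one (hN : IsRadialGauge N) (hN' : IsRadialGauge N') {x : E} (hx : N x = 1) :
    0 < N' x :=
  hN'.pos_of_ne_zero x (by rintro rfl; simp [hN.map_zero] at hx)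

theorem inv_smul_self_eq_one (hN' : IsRadialGauge N') {x : E} (hx : 0 < N' x) :
    N' ((N' x)⁻¹ • x) = 1 := by
  rw [hN'.smul_of_nonneg _ (inv_nonneg.2 hx.le), inv_mul_cancel₀ hx.ne']

theorem inv_smul_inv_smul (hN : IsRadialGauge N) {x : E} (hx : N x = 1) (hx' : 0 < N' x) :
    (N ((N' x)⁻¹ • x))⁻¹ • (N' x)⁻¹ • x = x := by
  rw [hN.smul_of_nonneg _ (inv_nonneg.2 hx'.le), hx, mul_one, inv_inv, smul_inv_smul₀ hx'.ne']

theorem continuous_inv_smul [ContinuousSMul ℝ E] (hN : IsRadialGauge N) (hN' : IsRadialGauge N') :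
    Continuous fun x : {x // N x = 1} => (N' x)⁻¹ • (x : E) :=
  ((hN'.continuous.comp continuous_subtype_val).inv₀
    fun x => (hN.pos_of_eq_one hN' x.2).ne').smul continuous_subtype_val

def homeomorphLevelSet [ContinuousSMul ℝ E] (hN : IsRadialGauge N) (hN' : IsRadialGauge N') :
    {x // N x = 1} ≃ₜ {x // N' x = 1} where
  toFun x := ⟨(N' x)⁻¹ • x, hN'.inv_smul_self_eq_one (hN.pos_of_eq_one hN' x.2)⟩
  invFun x := ⟨(N x)⁻¹ • x, hN.inv_smul_self_eq_one (hN'.pos_of_eq_one hN x.2)⟩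
  left_inv x := Subtype.ext (hN.inv_smul_inv_smul x.2 (hN.pos_of_eq_one hN' x.2))
  right_inv x := Subtype.ext (hN'.inv_smul_inv_smul x.2 (hN'.pos_of_eq_one hN x.2))
  continuous_toFun := (hN.continuous_inv_smul hN').subtype_mk _
  continuous_invFun := (hN'.continuous_inv_smul hN).subtype_mk _

theorem comp_continuousLinearEquiv {F : Type*} [AddCommGroup F] [Module ℝ F] [TopologicalSpace F]
    (hN : IsRadialGauge N) (e : F ≃L[ℝ] E) : IsRadialGauge (N ∘ e) where
  continuous := hN.continuous.comp e.continuous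
  pos_of_ne_zero x hx := hN.pos_of_ne_zero (e x) (e.map_ne_zero_iff.2 hx)
  smul_of_nonneg c hc x := by simp [hN.smul_of_nonneg c hc]

end IsRadialGauge

end RadialGauge

theorem isRadialGauge_norm {E : Type*} [NormedAddCommGroup E] [NormedSpace ℝ E] :
    IsRadialGauge (‖·‖ : E → ℝ) where
  continuous := continuous_norm
  pos_of_ne_zero _ := norm_pos_iff.2
  smul_of_nonneg c hc x := by rw [norm_smul, Real.norm_of_nonneg hc]

theorem WithLp.prod_norm_eq_one_iff_of_L2 {α β : Type*} [SeminormedAddCommGroup α]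
    [SeminormedAddCommGroup β] (z : α × β) :
    ‖WithLp.toLp 2 z‖ = 1 ↔ ‖z.1‖ ^ 2 + ‖z.2‖ ^ 2 = 1 := by
  rw [← pow_eq_one_iff_of_nonneg (norm_nonneg _) two_ne_zero, WithLp.prod_norm_sq_eq_of_L2]
  rfl

section RCLike

variable {𝕜 : Type*} [RCLike 𝕜]

theorem conj_zpow_of_norm_eq_one {w : 𝕜} (hw : ‖w‖ = 1) (n : ℤ) : conj (w ^ n) = w ^ (-n) := by
  rw [map_zpow₀, ← RCLike.inv_eq_conj hw, inv_zpow, zpow_neg]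

theorem eq_inv_mul_zpow_iff {u w z : 𝕜} (hu : ‖u‖ = 1) (hw : ‖w‖ = 1) (n : ℤ) :
    z = u⁻¹ * w ^ (-n) ↔ u = conj z * w ^ (-n) := by
  rw [← (starRingEnd 𝕜).injective.eq_iff, map_mul, map_inv₀, ← RCLike.inv_eq_conj hu, inv_inv,
    conj_zpow_of_norm_eq_one hw, neg_neg, zpow_neg,
    eq_mul_inv_iff_mul_eq₀ (zpow_ne_zero n (ne_zero_of_norm_ne_zero (by simp [hw]))), eq_comm]

end RCLike

instance : CompactSpace {u : ℂ // ‖u‖ = 1} :=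
  (isCompact_iff_compactSpace (s := {u | ‖u‖ = 1})).mp <| by
    convert isCompact_sphere (0 : ℂ) 1 using 1; ext; simp

instance : CompactSpace {w : ℂ // ‖w‖ ≤ 1} :=
  (isCompact_iff_compactSpace (s := {w | ‖w‖ ≤ 1})).mp <| by
    convert isCompact_closedBall (0 : ℂ) 1 using 1; ext; simp

namespace SurgeredSpace

variable (k : ℤ)

/-- `ℂ × ℂ` carries the sup norm, so the target is `∂(D² × D²)`, not `S³`. -/
def toPolydiscBoundary : SolidTorus ⊕ SolidTorus → {z : ℂ × ℂ // ‖z‖ = 1} :=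
  Sum.elim (fun p => ⟨(p.1, p.2), by simp [p.1.2, p.2.2]⟩)
    (fun q => ⟨(conj (q.2 : ℂ) * (q.1 : ℂ) ^ (-k), q.1), by simp [q.1.2, q.2.2]⟩)

theorem continuous_toPolydiscBoundary : Continuous (toPolydiscBoundary k) := by
  refine Continuous.sumElim (by fun_prop) (Continuous.subtype_mk ?_ _)
  have hzpow : Continuous fun q : SolidTorus => (q.1 : ℂ) ^ (-k) :=
    (continuous_subtype_val.comp continuous_fst).zpow₀ _
      fun q => .inl (ne_zero_of_norm_ne_zero (by simp [q.1.2]))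
  fun_prop

theorem toPolydiscBoundary_surjective : Function.Surjective (toPolydiscBoundary k) := by
  rintro ⟨⟨a, b⟩, hab⟩
  rcases max_choice ‖a‖ ‖b‖ with h | h <;> rw [Prod.norm_mk, h] at hab
  · have hb : ‖b‖ ≤ 1 := hab ▸ h ▸ le_max_right _ _
    exact ⟨.inl (⟨a, hab⟩, ⟨b, hb⟩), rfl⟩
  · have ha : ‖conj (a * b ^ k)‖ ≤ 1 := by
      simpa [hab] using (h ▸ le_max_left ‖a‖ ‖b‖ : ‖a‖ ≤ ‖b‖)
    refine ⟨.inr (⟨b, hab⟩, ⟨_, ha⟩), Subtype.ext (Prod.ext ?_ rfl)⟩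
    have hb0 : b ≠ 0 := ne_zero_of_norm_ne_zero (by simp [hab])
    simp [toPolydiscBoundary, zpow_neg, mul_inv_cancel_right₀ (zpow_ne_zero k hb0)]

theorem toPolydiscBoundary_eq_of_glueRel {x y : SolidTorus ⊕ SolidTorus} (h : glueRel k x y) :
    toPolydiscBoundary k x = toPolydiscBoundary k y := by
  obtain ⟨⟨u, w⟩, hw, rfl, ⟨v, z⟩, hv, hz, rfl⟩ := h
  refine Subtype.ext (Prod.ext ?_ hv.symm)
  simp only at hw hv hz
  change (u : ℂ) = conj (z : ℂ) * (v : ℂ) ^ (-k)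
  rw [hv]
  exact (eq_inv_mul_zpow_iff u.2 hw k).1 hz

theorem glueRel_of_toPolydiscBoundary_eq {p q : SolidTorus}
    (h : toPolydiscBoundary k (.inl p) = toPolydiscBoundary k (.inr q)) :
    glueRel k (.inl p) (.inr q) := by
  have h₁ : (p.1 : ℂ) = conj (q.2 : ℂ) * (q.1 : ℂ) ^ (-k) := congrArg (fun z => z.1.1) h
  have h₂ : (p.2 : ℂ) = q.1 := congrArg (fun z => z.1.2) h
  have hw : ‖(p.2 : ℂ)‖ = 1 := h₂ ▸ q.1.2
  exact ⟨p, hw, rfl, q, h₂.symm, (eq_inv_mul_zpow_iff p.1.2 hw k).2 (h₂ ▸ h₁), rfl⟩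

theorem toPolydiscBoundary_inl_injective :
    Function.Injective (toPolydiscBoundary k ∘ .inl) := fun p p' h => by
  obtain ⟨h₁, h₂⟩ := Prod.ext_iff.1 (congrArg Subtype.val h)
  exact Prod.ext (Subtype.ext h₁) (Subtype.ext h₂)

theorem toPolydiscBoundary_inr_injective :
    Function.Injective (toPolydiscBoundary k ∘ .inr) := fun q q' h => by
  obtain ⟨h₁, h₂⟩ := Prod.ext_iff.1 (congrArg Subtype.val h)
  have hv : q.1 = q'.1 := Subtype.ext h₂
  refine Prod.ext hv (Subtype.ext (star_injective ?_))
  simp only [Function.comp_apply, toPolydiscBoundary, Sum.elim_inr, hv] at h₁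
  exact mul_right_cancel₀ (zpow_ne_zero _ (ne_zero_of_norm_ne_zero (by simp [q'.1.2]))) h₁

theorem mk_eq_of_toPolydiscBoundary_eq {x y : SolidTorus ⊕ SolidTorus}
    (h : toPolydiscBoundary k x = toPolydiscBoundary k y) :
    Quot.mk (glueRel k) x = Quot.mk (glueRel k) y := by
  rcases x with p | q <;> rcases y with p' | q'
  · rw [toPolydiscBoundary_inl_injective k h]
  · exact Quot.sound (glueRel_of_toPolydiscBoundary_eq k h)
  · exact (Quot.sound (glueRel_of_toPolydiscBoundary_eq k h.symm)).symm
  · rw [toPolydiscBoundary_inr_injective k h]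

def homeomorphPolydiscBoundary : SurgeredSpace k ≃ₜ {z : ℂ × ℂ // ‖z‖ = 1} :=
  Quot.homeomorphOfFibers _ (continuous_toPolydiscBoundary k) (toPolydiscBoundary_surjective k)
    (fun _ _ => toPolydiscBoundary_eq_of_glueRel k) (fun _ _ => mk_eq_of_toPolydiscBoundary_eq k)

end SurgeredSpace

/-- For every integral framing `k`, surgery along `S¹ × {*} ⊂ S¹ × S²` produces the
3-sphere: the space obtained from two copies of the solid torus `S¹ × D²` by gluing
each boundary point `(u,w)`, `|w| = 1`, of the first copy to the boundary point
`(w, u⁻¹·w⁻ᵏ)` of the second copy is homeomorphic to `S³ ⊂ ℂ²`. -/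
theorem surgery_yields_sphere (k : ℤ) :
    Nonempty (SurgeredSpace k ≃ₜ
      {z : ℂ × ℂ // ‖z.1‖ ^ 2 + ‖z.2‖ ^ 2 = 1}) :=
  have hL2 : IsRadialGauge fun z : ℂ × ℂ => ‖WithLp.toLp 2 z‖ :=
    isRadialGauge_norm.comp_continuousLinearEquiv (WithLp.prodContinuousLinearEquiv 2 ℝ ℂ ℂ).symm
  ⟨(SurgeredSpace.homeomorphPolydiscBoundary k).trans <|
    (isRadialGauge_norm.homeomorphLevelSet hL2).trans <|
    (Homeomorph.refl _).subtype fun z => WithLp.prod_norm_eq_one_iff_of_L2 z⟩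
end
end
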